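/- Let φ : ℝ → ℝ be the lift of an orientation-preserving C^∞ diffeomorphism of S¹ (φ is C^∞, φ' > 0, φ(θ+2π) = φ(θ)+2π), and for nonzero integers m, n set I_{n,m} = (1/2π)∫₀^{2π} e^{i(mφ(θ) − nθ)}dθ. Then Σ_{n>0, m<0} |n|·|I_{n,m}|² < ∞ and Σ_{n<0, m>0} |n|·|I_{n,m}|² < ∞. -/

import Mathlib

open MeasureTheory

/-- `I_{n,m} = (1/2π) ∫₀^{2π} e^{i(mφ(θ) − nθ)} dθ`, the `n`-th Fourier coefficient of
`θ ↦ e^{imφ(θ)}`. -/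
noncomputable def Icoef (φ : ℝ → ℝ) (n m : ℤ) : ℂ :=
  (1 / (2 * Real.pi)) * ∫ θ in (0:ℝ)..(2 * Real.pi),
    Complex.exp (Complex.I * ((m : ℝ) * φ θ - (n : ℝ) * θ : ℝ))

/-!
For `m` and `n` of opposite signs the phase `ψ(θ) = mφ(θ) − nθ` has no stationary point:
`|ψ'| = |m|φ' + |n| ≥ κ (|m| + |n|)` with `κ = min (min φ') 1`, while `ψ'' = mφ''` and
`ψ''' = mφ'''` are `O(|m|)`. As `e^{iψ}`, `ψ'` and `ψ''` are `2π`-periodic, integrating by parts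
twice against `e^{iψ} = (e^{iψ})' / (iψ')` produces no boundary terms and gives
`|I_{n,m}| = O((|n| + |m|)⁻²)`. Hence `|n| |I_{n,m}|² = O(|n| / (|n| + |m|)⁴)`, which is at most
`O(|n|^{-3/2} |m|^{-3/2})`, summable over `ℤ²`.
-/

open Complex

section NonstationaryPhase

variable {ψ ψ₁ ψ₂ ψ₃ : ℝ → ℝ} {a b : ℝ}

theorem integral_mul_deriv_mul_cexp {u u' : ℝ → ℝ} (hψ : ∀ x, HasDerivAt ψ (ψ₁ x) x)
    (hψ₁ : Continuous ψ₁) (hu : ∀ x, HasDerivAt u (u' x) x) (hu' : Continuous u')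
    (hub : u b = u a) (hψb : cexp (I * ψ b) = cexp (I * ψ a)) :
    ∫ x in a..b, ((u x * ψ₁ x : ℝ) : ℂ) * cexp (I * ψ x) =
      I * ∫ x in a..b, (u' x : ℂ) * cexp (I * ψ x) := by
  have hv : ∀ x, HasDerivAt (fun x => cexp (I * ψ x)) (cexp (I * ψ x) * (I * ψ₁ x)) x :=
    fun x => ((hψ x).ofReal_comp.const_mul I).cexp
  have hψc : Continuous ψ := continuous_iff_continuousAt.2 fun x => (hψ x).continuousAt
  have ibp := intervalIntegral.integral_mul_deriv_eq_deriv_mul (fun x _ => (hu x).ofReal_comp)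
    (fun x _ => hv x) ((by fun_prop : Continuous fun x => (u' x : ℂ)).intervalIntegrable a b)
    ((by fun_prop : Continuous fun x => cexp (I * ψ x) * (I * ψ₁ x)).intervalIntegrable a b)
  rw [hub, hψb, sub_self, zero_sub] at ibp
  have hI : ∀ x, (u x : ℂ) * (cexp (I * ψ x) * (I * ψ₁ x)) =
      I * (((u x * ψ₁ x : ℝ) : ℂ) * cexp (I * ψ x)) := fun x => by push_cast; ring
  simp only [hI, intervalIntegral.integral_const_mul] at ibp
  calc _ = -I * (I * ∫ x in a..b, ((u x * ψ₁ x : ℝ) : ℂ) * cexp (I * ψ x)) := by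
        rw [← mul_assoc, neg_mul, I_mul_I, neg_neg, one_mul]
    _ = _ := by rw [ibp]; ring

theorem integral_cexp_eq_integral_mul_cexp (h₀ : ∀ x, HasDerivAt ψ (ψ₁ x) x)
    (h₁ : ∀ x, HasDerivAt ψ₁ (ψ₂ x) x) (h₂ : ∀ x, HasDerivAt ψ₂ (ψ₃ x) x)
    (hψ₃ : Continuous ψ₃) (hne : ∀ x, ψ₁ x ≠ 0) (hb₀ : cexp (I * ψ b) = cexp (I * ψ a))
    (hb₁ : ψ₁ b = ψ₁ a) (hb₂ : ψ₂ b = ψ₂ a) :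
    ∫ x in a..b, cexp (I * ψ x) =
      ∫ x in a..b, ((ψ₃ x / ψ₁ x ^ 3 - 3 * ψ₂ x ^ 2 / ψ₁ x ^ 4 : ℝ) : ℂ) * cexp (I * ψ x) := by
  have hψ₁ : Continuous ψ₁ := continuous_iff_continuousAt.2 fun x => (h₁ x).continuousAt
  have hψ₂ : Continuous ψ₂ := continuous_iff_continuousAt.2 fun x => (h₂ x).continuousAt
  have ibp₁ := integral_mul_deriv_mul_cexp h₀ hψ₁ (u := ψ₁⁻¹) (u' := fun x => -ψ₂ x / ψ₁ x ^ 2)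
    (fun x => (h₁ x).inv (hne x)) (by fun_prop (disch := exact fun x => pow_ne_zero _ (hne x)))
    (by simp [hb₁]) hb₀
  have ibp₂ := integral_mul_deriv_mul_cexp h₀ hψ₁ (u := fun x => -ψ₂ x / ψ₁ x ^ 3)
    (u' := fun x => -(ψ₃ x / ψ₁ x ^ 3 - 3 * ψ₂ x ^ 2 / ψ₁ x ^ 4))
    (fun x => ((h₂ x).neg.div ((h₁ x).pow 3) (pow_ne_zero _ (hne x))).congr_deriv (by
      simp only [Pi.pow_apply, Pi.neg_apply]; field_simp [hne x]; ring))
    (by fun_prop (disch := exact fun x => pow_ne_zero _ (hne x))) (by simp [hb₁, hb₂]) hb₀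
  have e₁ : ∀ x, (ψ₁⁻¹ x * ψ₁ x : ℝ) = 1 := fun x => inv_mul_cancel₀ (hne x)
  have e₂ : ∀ x, (-ψ₂ x / ψ₁ x ^ 3 * ψ₁ x : ℝ) = -ψ₂ x / ψ₁ x ^ 2 := fun x => by
    field_simp [hne x]
  simp only [e₁, e₂, Complex.ofReal_one, one_mul] at ibp₁ ibp₂
  rw [ibp₁, ibp₂]
  simp only [Complex.ofReal_neg, neg_mul, intervalIntegral.integral_neg]
  rw [← mul_assoc, I_mul_I]; ring

theorem norm_integral_cexp_le (h₀ : ∀ x, HasDerivAt ψ (ψ₁ x) x)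
    (h₁ : ∀ x, HasDerivAt ψ₁ (ψ₂ x) x) (h₂ : ∀ x, HasDerivAt ψ₂ (ψ₃ x) x)
    (hψ₃ : Continuous ψ₃) (hb₀ : cexp (I * ψ b) = cexp (I * ψ a))
    (hb₁ : ψ₁ b = ψ₁ a) (hb₂ : ψ₂ b = ψ₂ a) {L M₁ M₂ : ℝ} (hL : 0 < L)
    (hψ₁L : ∀ x, L ≤ |ψ₁ x|) (hψ₂M : ∀ x, |ψ₂ x| ≤ M₁) (hψ₃M : ∀ x, |ψ₃ x| ≤ M₂) :
    ‖∫ x in a..b, cexp (I * ψ x)‖ ≤ (M₂ / L ^ 3 + 3 * M₁ ^ 2 / L ^ 4) * |b - a| := by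
  have hne : ∀ x, ψ₁ x ≠ 0 := fun x => abs_pos.1 (hL.trans_le (hψ₁L x))
  rw [integral_cexp_eq_integral_mul_cexp h₀ h₁ h₂ hψ₃ hne hb₀ hb₁ hb₂]
  refine intervalIntegral.norm_integral_le_of_norm_le_const fun x _ => ?_
  rw [norm_mul, mul_comm I, norm_exp_ofReal_mul_I, mul_one, Complex.norm_real, Real.norm_eq_abs]
  have hM₂ : 0 ≤ M₂ := (abs_nonneg _).trans (hψ₃M x)
  calc |ψ₃ x / ψ₁ x ^ 3 - 3 * ψ₂ x ^ 2 / ψ₁ x ^ 4|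
      ≤ |ψ₃ x| / |ψ₁ x| ^ 3 + 3 * |ψ₂ x| ^ 2 / |ψ₁ x| ^ 4 := by
        refine (abs_sub _ _).trans_eq ?_
        simp [abs_div, abs_mul]
    _ ≤ M₂ / L ^ 3 + 3 * M₁ ^ 2 / L ^ 4 := by
        gcongr
        exacts [hψ₃M x, hψ₁L x, hψ₂M x, hψ₁L x]

end NonstationaryPhase

section IterateDeriv

variable {𝕜 F : Type*} [NontriviallyNormedField 𝕜] [NormedAddCommGroup F] [NormedSpace 𝕜 F]
  {f : 𝕜 → F}

theorem Function.Periodic.deriv {c : 𝕜} (h : Function.Periodic f c) :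
    Function.Periodic (deriv f) c := fun x => by
  rw [← deriv_comp_add_const, h.funext]

theorem periodic_deriv_of_add_const {c : 𝕜} {d : F} (h : ∀ x, f (x + c) = f x + d) :
    Function.Periodic (deriv f) c := fun x => by
  rw [← deriv_comp_add_const, funext h, deriv_add_const]

theorem periodic_iterate_deriv_of_add_const {c : 𝕜} {d : F} (h : ∀ x, f (x + c) = f x + d)
    (k : ℕ) : Function.Periodic (deriv^[k + 1] f) c := by
  induction k with
  | zero => exact periodic_deriv_of_add_const h
  | succ k ih => rw [Function.iterate_succ_apply']; exact ih.deriv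

theorem hasDerivAt_iterate_deriv (hf : ContDiff 𝕜 (⊤ : ℕ∞) f) (k : ℕ) (x : 𝕜) :
    HasDerivAt (deriv^[k] f) (deriv^[k + 1] f x) x := by
  rw [Function.iterate_succ_apply']
  exact ((hf.iterate_deriv k).differentiable (by simp) x).hasDerivAt

end IterateDeriv

theorem Function.Periodic.exists_abs_le {f : ℝ → ℝ} {c : ℝ} (hp : Function.Periodic f c)
    (hc : c ≠ 0) (hf : Continuous f) : ∃ M, ∀ x, |f x| ≤ M := by
  obtain ⟨M, hM⟩ := isBounded_iff_forall_norm_le.1 (hp.isBounded_of_continuous hc hf)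
  exact ⟨M, fun x => hM _ (Set.mem_range_self x)⟩

theorem Function.Periodic.exists_pos_le {f : ℝ → ℝ} {c : ℝ} (hp : Function.Periodic f c)
    (hc : c ≠ 0) (hf : Continuous f) (hpos : ∀ x, 0 < f x) : ∃ κ > 0, ∀ x, κ ≤ f x := by
  obtain ⟨_, ⟨x₀, rfl⟩, hmin⟩ :=
    (hp.compact_of_continuous hc hf).exists_isLeast (Set.range_nonempty f)
  exact ⟨f x₀, hpos x₀, fun x => hmin ⟨x, rfl⟩⟩

theorem mul_abs_add_abs_le_abs_mul_sub {m n x κ : ℝ} (hmn : m * n < 0) (hκ : 0 < κ) (hκx : κ ≤ x)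
    (hκ₁ : κ ≤ 1) : κ * (|n| + |m|) ≤ |m * x - n| := by
  rcases lt_or_gt_of_ne (left_ne_zero_of_mul hmn.ne) with hm | hm
  · have hn : 0 < n := pos_of_mul_neg_right hmn hm.le
    rw [abs_of_pos hn, abs_of_neg hm, abs_of_neg (by nlinarith)]
    nlinarith
  · have hn : n < 0 := neg_of_mul_neg_right hmn hm.le
    rw [abs_of_neg hn, abs_of_pos hm, abs_of_pos (by nlinarith)]
    nlinarith

theorem cexp_I_mul_phase_add_two_pi {φ : ℝ → ℝ}
    (hlift : ∀ θ, φ (θ + 2 * Real.pi) = φ θ + 2 * Real.pi) (n m : ℤ) (θ : ℝ) :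
    cexp (I * ((m * φ (θ + 2 * Real.pi) - n * (θ + 2 * Real.pi) : ℝ) : ℂ)) =
      cexp (I * ((m * φ θ - n * θ : ℝ) : ℂ)) := by
  have : I * ((m * φ (θ + 2 * Real.pi) - n * (θ + 2 * Real.pi) : ℝ) : ℂ) =
      I * ((m * φ θ - n * θ : ℝ) : ℂ) + (m - n : ℤ) * (2 * Real.pi * I) := by
    rw [hlift]; push_cast; ring
  rw [this, Complex.exp_add, Complex.exp_int_mul_two_pi_mul_I, mul_one]

section Lift

variable {φ : ℝ → ℝ} (hφ : ContDiff ℝ (⊤ : ℕ∞) φ)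
  (hlift : ∀ θ, φ (θ + 2 * Real.pi) = φ θ + 2 * Real.pi)
include hφ hlift

theorem norm_Icoef_le {κ B₂ B₃ : ℝ} (hκ : 0 < κ) (hκ₁ : κ ≤ 1) (hκφ : ∀ x, κ ≤ deriv φ x)
    (hB₂ : ∀ x, |deriv^[2] φ x| ≤ B₂) (hB₃ : ∀ x, |deriv^[3] φ x| ≤ B₃) {n m : ℤ}
    (hmn : (m : ℝ) * n < 0) :
    ‖Icoef φ n m‖ ≤ (B₃ / κ ^ 3 + 3 * B₂ ^ 2 / κ ^ 4) / (|(n : ℝ)| + |(m : ℝ)|) ^ 2 := by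
  set s := |(n : ℝ)| + |(m : ℝ)|
  have hs : 0 < s := by
    have := abs_pos.2 (left_ne_zero_of_mul hmn.ne); positivity
  have hms : |(m : ℝ)| ≤ s := le_add_of_nonneg_left (abs_nonneg _)
  have hd := hasDerivAt_iterate_deriv hφ
  have hper := periodic_iterate_deriv_of_add_const hlift
  have hbound := norm_integral_cexp_le (a := 0) (b := 2 * Real.pi)
    (ψ := fun θ => m * φ θ - n * θ) (ψ₁ := fun θ => m * deriv φ θ - n)
    (ψ₂ := fun θ => m * deriv^[2] φ θ) (ψ₃ := fun θ => m * deriv^[3] φ θ)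
    (L := κ * s) (M₁ := s * B₂) (M₂ := s * B₃)
    (fun x => (((hd 0 x).const_mul _).sub ((hasDerivAt_id x).const_mul _)).congr_deriv (by simp))
    (fun x => ((hd 1 x).const_mul _).sub_const _) (fun x => (hd 2 x).const_mul _)
    (continuous_const.mul (hφ.iterate_deriv 3).continuous)
    (by simpa using cexp_I_mul_phase_add_two_pi hlift n m 0)
    (by simpa using congrArg ((m : ℝ) * · - n) ((hper 0) 0))
    (by simpa using congrArg ((m : ℝ) * ·) ((hper 1) 0)) (by positivity)
    (fun x => mul_abs_add_abs_le_abs_mul_sub hmn hκ (hκφ x) hκ₁)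
    (fun x => by rw [abs_mul]; exact mul_le_mul hms (hB₂ x) (abs_nonneg _) hs.le)
    (fun x => by rw [abs_mul]; exact mul_le_mul hms (hB₃ x) (abs_nonneg _) hs.le)
  calc ‖Icoef φ n m‖ = ‖∫ θ in (0 : ℝ)..2 * Real.pi, cexp (I * ((m * φ θ - n * θ : ℝ) : ℂ))‖
        / (2 * Real.pi) := by
        rw [Icoef, norm_mul]
        simp [abs_of_pos Real.pi_pos]
        ring
    _ ≤ (s * B₃ / (κ * s) ^ 3 + 3 * (s * B₂) ^ 2 / (κ * s) ^ 4) * |2 * Real.pi - 0|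
        / (2 * Real.pi) := by gcongr
    _ = (B₃ / κ ^ 3 + 3 * B₂ ^ 2 / κ ^ 4) / s ^ 2 := by
        rw [sub_zero, abs_of_pos Real.two_pi_pos]
        field_simp

theorem exists_norm_Icoef_le (hφ' : ∀ θ, 0 < deriv φ θ) :
    ∃ K, ∀ n m : ℤ, (m : ℝ) * n < 0 → ‖Icoef φ n m‖ ≤ K / (|(n : ℝ)| + |(m : ℝ)|) ^ 2 := by
  have hper := periodic_iterate_deriv_of_add_const hlift
  have hcont (k : ℕ) : Continuous (deriv^[k] φ) := (hφ.iterate_deriv k).continuous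
  have h2π : 2 * Real.pi ≠ 0 := Real.two_pi_pos.ne'
  obtain ⟨κ, hκ, hκφ⟩ := (hper 0).exists_pos_le h2π (hcont 1) hφ'
  obtain ⟨B₂, hB₂⟩ := (hper 1).exists_abs_le h2π (hcont 2)
  obtain ⟨B₃, hB₃⟩ := (hper 2).exists_abs_le h2π (hcont 3)
  exact ⟨_, fun n m => norm_Icoef_le hφ hlift (lt_min hκ one_pos) (min_le_right κ 1)
    (fun x => (min_le_left κ 1).trans (hκφ x)) hB₂ hB₃⟩

end Lift

theorem div_add_pow_four_le_rpow {x y : ℝ} (hx : 0 < x) (hy : 0 < y) :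
    x / (x + y) ^ 4 ≤ (x * y) ^ (-(3 / 2 : ℝ)) := by
  calc x / (x + y) ^ 4 ≤ 1 / (x + y) ^ 3 := by
        rw [div_le_div_iff₀ (by positivity) (by positivity)]
        nlinarith [pow_pos hy 3, pow_pos (add_pos hx hy) 3]
    _ = ((x + y) ^ 2) ^ (-(3 / 2 : ℝ)) := by
        rw [← Real.rpow_natCast (x + y) 2, ← Real.rpow_mul (by positivity),
          show ((2 : ℕ) : ℝ) * -(3 / 2) = -((3 : ℕ) : ℝ) by norm_num,
          Real.rpow_neg (by positivity), Real.rpow_natCast, one_div]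
    _ ≤ (x * y) ^ (-(3 / 2 : ℝ)) :=
        Real.rpow_le_rpow_of_nonpos (by positivity) (by nlinarith [sq_nonneg (x - y)]) (by norm_num)

theorem summable_abs_mul_norm_sq_of_le {E : Type*} [SeminormedAddCommGroup E] {c : ℤ → ℤ → E}
    {K : ℝ} (hc : ∀ n m : ℤ, (m : ℝ) * n < 0 → ‖c n m‖ ≤ K / (|(n : ℝ)| + |(m : ℝ)|) ^ 2)
    (P : ℤ × ℤ → Prop) [DecidablePred P] (hP : ∀ p, P p → (p.2 : ℝ) * p.1 < 0) :
    Summable fun p : ℤ × ℤ => if P p then |(p.1 : ℝ)| * ‖c p.1 p.2‖ ^ 2 else 0 := by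
  have h₃₂ : Summable fun k : ℤ => |(k : ℝ)| ^ (-(3 / 2 : ℝ)) :=
    Real.summable_abs_int_rpow (by norm_num)
  refine Summable.of_nonneg_of_le (fun p => ?_) (fun p => ?_)
    ((h₃₂.mul_of_nonneg h₃₂ (fun _ => by positivity) (fun _ => by positivity)).mul_left (K ^ 2))
  · split_ifs <;> positivity
  split_ifs with hp
  · obtain ⟨n, m⟩ := p
    have hmn := hP _ hp
    have hn : 0 < |(n : ℝ)| := abs_pos.2 (right_ne_zero_of_mul hmn.ne)
    have hm : 0 < |(m : ℝ)| := abs_pos.2 (left_ne_zero_of_mul hmn.ne)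
    calc |(n : ℝ)| * ‖c n m‖ ^ 2 ≤ |(n : ℝ)| * (K / (|(n : ℝ)| + |(m : ℝ)|) ^ 2) ^ 2 := by
          gcongr; exact hc n m hmn
      _ = K ^ 2 * (|(n : ℝ)| / (|(n : ℝ)| + |(m : ℝ)|) ^ 4) := by
          rw [div_pow, ← pow_mul]; ring
      _ ≤ K ^ 2 * (|(n : ℝ)| * |(m : ℝ)|) ^ (-(3 / 2 : ℝ)) := by
          gcongr; exact div_add_pow_four_le_rpow hn hm
      _ = _ := by rw [Real.mul_rpow hn.le hm.le]
  · positivity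

/-- For a lift `φ` of an orientation-preserving `C^∞` diffeomorphism of `S¹`,
`Σ_{n>0, m<0} |n|·|I_{n,m}|² < ∞` and `Σ_{n<0, m>0} |n|·|I_{n,m}|² < ∞`. -/
theorem offdiag_hilbert_schmidt (φ : ℝ → ℝ) (hφ : ContDiff ℝ (⊤ : ℕ∞) φ)
    (hφ' : ∀ θ, 0 < deriv φ θ) (hlift : ∀ θ, φ (θ + 2 * Real.pi) = φ θ + 2 * Real.pi) :
    Summable (fun p : ℤ × ℤ =>
      if 0 < p.1 ∧ p.2 < 0 then (|p.1| : ℝ) * ‖Icoef φ p.1 p.2‖ ^ 2 else (0:ℝ)) ∧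
    Summable (fun p : ℤ × ℤ =>
      if p.1 < 0 ∧ 0 < p.2 then (|p.1| : ℝ) * ‖Icoef φ p.1 p.2‖ ^ 2 else (0:ℝ)) := by
  obtain ⟨K, hK⟩ := exists_norm_Icoef_le hφ hlift hφ'
  refine ⟨summable_abs_mul_norm_sq_of_le hK _ fun p hp => ?_,
    summable_abs_mul_norm_sq_of_le hK _ fun p hp => ?_⟩
  · exact mul_neg_of_neg_of_pos (Int.cast_lt_zero.2 hp.2) (Int.cast_pos.2 hp.1)
  · exact mul_neg_of_pos_of_neg (Int.cast_pos.2 hp.2) (Int.cast_lt_zero.2 hp.1)
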